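/- arXiv:2602.10484 — 3 statements merged into one kernel-verified Lean document; each statement's English description precedes it below -/
import Mathlib

section
/- For the inverted Hüsler–Reiss model with Q(x,y) = exp(-ℓ(-log x, -log y)) where ℓ(x,y) = x Φ(λ + (log x - log y)/(2λ)) + y Φ(λ + (log y - log x)/(2λ)) and θ = Φ(λ) ∈ (1/2, 1], one has lim_{p→0} p^{-2θ} Q(px, py) = (xy)^θ for all x, y > 0; hence the coefficient of tail dependence is η = 1/(2θ) and c(x,y) = (xy)^θ. -/
/-!
With `A = -log (p x)` and `B = -log (p y)` we have `A - B = log y - log x` constant, `A + B =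
-2 log p - log (x y)`, and the arguments of `Φ` in `ℓ (A, B)` are `λ ± ε` with
`ε = (log A - log B) / (2λ) → 0`. Hence `ℓ (A, B) - θ (A + B)` equals
`A (Φ(λ + ε) + Φ(λ - ε) - 2θ) + (B - A) (Φ(λ - ε) - θ)`. The symmetric second difference of the
differentiable `Φ` is `o(ε)`, while `A ε` stays bounded, so this remainder tends to `0`, and
`p ^ (-2θ) Q(p x, p y) = exp (θ log (x y) - (ℓ (A, B) - θ (A + B))) → (x y) ^ θ`.
-/

open Filter Topology Set

noncomputable def stdNormalCDF (t : ℝ) : ℝ :=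
  ∫ x in Set.Iic t, (Real.sqrt (2 * Real.pi))⁻¹ * Real.exp (-(x ^ 2) / 2)

open Asymptotics MeasureTheory

theorem hasDerivAt_integral_Iic {f : ℝ → ℝ} (hf : Continuous f) (hfi : Integrable f) (t : ℝ) :
    HasDerivAt (fun s => ∫ x in Iic s, f x) (f t) t := by
  have hsplit :
      (fun s => ∫ x in Iic s, f x) = fun s => (∫ x in Iic 0, f x) + ∫ x in 0..s, f x := by
    ext s
    rw [← intervalIntegral.integral_Iic_sub_Iic hfi.integrableOn hfi.integrableOn]
    ring
  rw [hsplit]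
  exact (intervalIntegral.integral_hasDerivAt_right (hf.intervalIntegrable 0 t)
    (hf.stronglyMeasurableAtFilter _ _) hf.continuousAt).const_add _

theorem differentiable_stdNormalCDF : Differentiable ℝ stdNormalCDF := by
  have hint : Integrable fun x : ℝ => (Real.sqrt (2 * Real.pi))⁻¹ * Real.exp (-(x ^ 2) / 2) := by
    simpa [div_eq_inv_mul, mul_comm] using
      (integrable_exp_neg_mul_sq (b := (2⁻¹ : ℝ)) (by norm_num)).const_mul
        (Real.sqrt (2 * Real.pi))⁻¹
  exact fun t => (hasDerivAt_integral_Iic (by fun_prop) hint t).differentiableAt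

theorem DifferentiableAt.isLittleO_symmetric_second_difference {f : ℝ → ℝ} {a : ℝ}
    (hf : DifferentiableAt ℝ f a) :
    (fun h => f (a + h) + f (a - h) - 2 * f a) =o[𝓝 0] fun h => h := by
  have hright := hasDerivAt_iff_isLittleO_nhds_zero.mp hf.hasDerivAt
  have hleft : (fun h => f (a - h) - f a + h * deriv f a) =o[𝓝 0] fun h => h :=
    (hright.comp_tendsto (continuous_neg.tendsto' 0 0 neg_zero)).neg_right.congr
      (fun h => by simp only [Function.comp_apply, smul_eq_mul, ← sub_eq_add_neg]; ring)
      fun h => neg_neg h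
  refine (hright.add hleft).congr_left fun h => ?_
  simp only [smul_eq_mul]
  ring

theorem Real.tendsto_mul_log_add_sub_log (c : ℝ) :
    Tendsto (fun t => (t + c) * (Real.log (t + c) - Real.log t)) atTop (𝓝 c) := by
  have hratio : Tendsto (fun t : ℝ => 1 + c / t) atTop (𝓝 1) := by
    simpa using (tendsto_const_nhds.div_atTop tendsto_id).const_add (1 : ℝ)
  have hlog : Tendsto (fun t : ℝ => Real.log (1 + c / t)) atTop (𝓝 0) := by
    simpa [Function.comp_def] using (Real.continuousAt_log one_ne_zero).tendsto.comp hratio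
  have hsum := (Real.tendsto_mul_log_one_add_div_atTop c).add (hlog.const_mul c)
  rw [mul_zero, add_zero] at hsum
  refine hsum.congr' ?_
  filter_upwards [eventually_gt_atTop 0, eventually_gt_atTop (-c)] with t ht htc
  rw [← Real.log_div (by linarith) ht.ne', add_div _ _ t, div_self ht.ne']
  ring

theorem DifferentiableAt.tendsto_mul_log_ratio_remainder {f : ℝ → ℝ} {a : ℝ}
    (hf : DifferentiableAt ℝ f a) (κ c : ℝ) :
    Tendsto (fun t => (t + c) * f (a + (Real.log (t + c) - Real.log t) / κ)
      + t * f (a + (Real.log t - Real.log (t + c)) / κ) - f a * (t + c + t)) atTop (𝓝 0) := by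
  set ε : ℝ → ℝ := fun t => (Real.log (t + c) - Real.log t) / κ
  have hmul : Tendsto (fun t => (t + c) * ε t) atTop (𝓝 (c / κ)) := by
    simpa only [ε, mul_div_assoc] using (Real.tendsto_mul_log_add_sub_log c).div_const κ
  have hshift : Tendsto (fun t : ℝ => t + c) atTop atTop :=
    tendsto_atTop_add_const_right _ c tendsto_id
  have hε : Tendsto ε atTop (𝓝 0) := by
    refine (hmul.div_atTop hshift).congr' ?_
    filter_upwards [hshift.eventually_ne_atTop 0] with t ht
    field_simp
  have hsymm : (fun t => (t + c) * (f (a + ε t) + f (a - ε t) - 2 * f a)) =o[atTop]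
      fun _ => (1 : ℝ) :=
    ((isBigO_refl _ _).mul_isLittleO
      (hf.isLittleO_symmetric_second_difference.comp_tendsto hε)).trans_isBigO
      (hmul.isBigO_one ℝ)
  have hcorrection : Tendsto (fun t => c * (f (a - ε t) - f a)) atTop (𝓝 0) := by
    have := (hf.continuousAt.tendsto.comp (by simpa using hε.const_sub a)).sub_const (f a)
    simpa using this.const_mul c
  have hsum := ((isLittleO_one_iff ℝ).mp hsymm).sub hcorrection
  rw [sub_zero] at hsum
  refine hsum.congr fun t => ?_
  rw [show (Real.log t - Real.log (t + c)) / κ = -ε t by simp only [ε]; ring,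
    ← sub_eq_add_neg]
  ring

theorem inverted_husler_reiss_tail_limit_general (lam : ℝ)
    (θ : ℝ) (hθ : θ = stdNormalCDF lam)
    (ℓ : ℝ → ℝ → ℝ)
    (hℓ : ℓ = fun x y =>
      x * stdNormalCDF (lam + (Real.log x - Real.log y) / (2 * lam)) +
      y * stdNormalCDF (lam + (Real.log y - Real.log x) / (2 * lam)))
    (Q : ℝ → ℝ → ℝ)
    (hQ : Q = fun x y => Real.exp (-(ℓ (-Real.log x) (-Real.log y)))) :
    ∀ x : ℝ, 0 < x → ∀ y : ℝ, 0 < y →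
      Tendsto (fun p : ℝ => p ^ (-(2 * θ)) * Q (p * x) (p * y)) (𝓝[>] 0)
        (𝓝 ((x * y) ^ θ)) := by
  intro x hx y hy
  subst hQ hℓ hθ
  have hneglog : Tendsto (fun p => -Real.log p - Real.log y) (𝓝[>] 0) atTop :=
    tendsto_atTop_add_const_right _ _ (tendsto_neg_atBot_atTop.comp Real.tendsto_log_nhdsGT_zero)
  have hremainder := ((differentiable_stdNormalCDF lam).tendsto_mul_log_ratio_remainder
    (2 * lam) (Real.log y - Real.log x)).comp hneglog
  have hlim := (Real.continuous_exp.tendsto _).comp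
    (tendsto_const_nhds (x := stdNormalCDF lam * Real.log (x * y)) |>.sub hremainder)
  rw [sub_zero, mul_comm, ← Real.rpow_def_of_pos (mul_pos hx hy)] at hlim
  refine hlim.congr' ?_
  filter_upwards [self_mem_nhdsWithin] with p (hp : 0 < p)
  have hpx : -Real.log (p * x) = (-Real.log p - Real.log y) + (Real.log y - Real.log x) := by
    rw [Real.log_mul hp.ne' hx.ne']; ring
  have hpy : -Real.log (p * y) = -Real.log p - Real.log y := by
    rw [Real.log_mul hp.ne' hy.ne']; ring
  simp only [Function.comp_apply, hpx, hpy]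
  rw [Real.rpow_def_of_pos hp, ← Real.exp_add, Real.log_mul hx.ne' hy.ne']
  congr 1
  ring

theorem inverted_husler_reiss_tail_limit (lam : ℝ) (hlam : 0 < lam)
    (θ : ℝ) (hθ : θ = stdNormalCDF lam) (hθ' : θ ∈ Set.Ioc ((1:ℝ)/2) 1)
    (ℓ : ℝ → ℝ → ℝ)
    (hℓ : ℓ = fun x y =>
      x * stdNormalCDF (lam + (Real.log x - Real.log y) / (2 * lam)) +
      y * stdNormalCDF (lam + (Real.log y - Real.log x) / (2 * lam)))
    (Q : ℝ → ℝ → ℝ)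
    (hQ : Q = fun x y => Real.exp (-(ℓ (-Real.log x) (-Real.log y)))) :
    ∀ x : ℝ, 0 < x → ∀ y : ℝ, 0 < y →
      Tendsto (fun p : ℝ => p ^ (-(2 * θ)) * Q (p * x) (p * y)) (𝓝[>] 0)
        (𝓝 ((x * y) ^ θ)) :=
  inverted_husler_reiss_tail_limit_general lam θ hθ ℓ hℓ Q hQ
end

section
/- Suppose η ∈ (1/2,1), c(1,·;θ₀) is non-decreasing with continuous positive derivative at 0 (c_y(1,0;θ₀) > 0), the exact adjustment factor η_p satisfies p^{-1/η} Q(p, p η_p) = p^{2-1/η} and the approximation error bound |p^{-1/η} Q(p, py) - c(1,y;θ₀)| = O(q₁(p)) holds uniformly with q₁(p) = o(p^{2-1/η}), and η*_p solves c(1, η*_p; θ₀) = p^{2-1/η}. Then η_p / η*_p → 1 as p → 0. (Lemma 2 of the paper.) -/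
open Filter Topology Set

theorem lemma2_ratio_tendsto_one (η : ℝ) (hη : η ∈ Set.Ioo ((1:ℝ)/2) 1)
    (f : ℝ → ℝ) (hmono : Monotone f) (h0 : f 0 = 0)
    (hdiff : ∀ y : ℝ, DifferentiableAt ℝ f y)
    (hderivcont : ContinuousAt (deriv f) 0) (hderivpos : 0 < deriv f 0)
    (Q : ℝ → ℝ → ℝ) (q₁ : ℝ → ℝ) (δ : ℝ) (hδ : 0 < δ)
    (ηp ηstar : ℝ → ℝ)
    (hηp : ∀ p ∈ Set.Ioo (0:ℝ) δ, ηp p ∈ Set.Ioc (0:ℝ) 1)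
    (hηs : ∀ p ∈ Set.Ioo (0:ℝ) δ, ηstar p ∈ Set.Ioc (0:ℝ) 1)
    (hQeq : ∀ p ∈ Set.Ioo (0:ℝ) δ, Q p (p * ηp p) = p ^ 2)
    (herr : ∃ C > (0:ℝ), ∀ p ∈ Set.Ioo (0:ℝ) δ, ∀ y ∈ Set.Icc (0:ℝ) 1,
      |p ^ (-(1/η)) * Q p (p * y) - f y| ≤ C * q₁ p)
    (hq₁ : Tendsto (fun p : ℝ => q₁ p / p ^ (2 - 1/η)) (𝓝[>] 0) (𝓝 0))
    (hstar : ∀ p ∈ Set.Ioo (0:ℝ) δ, f (ηstar p) = p ^ (2 - 1/η))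
    (hηp0 : Tendsto ηp (𝓝[>] 0) (𝓝 0))
    (hηs0 : Tendsto ηstar (𝓝[>] 0) (𝓝 0)) :
    Tendsto (fun p : ℝ => ηp p / ηstar p) (𝓝[>] 0) (𝓝 1) := by
  obtain ⟨C, hC, herr⟩ := herr
  set d := deriv f 0 with hd
  -- neighborhood where deriv is close to d
  have hball : ∀ᶠ y in 𝓝 (0:ℝ), deriv f y ∈ Set.Ioo (d/2) (3*d/2) := by
    apply hderivcont.eventually_mem
    exact Ioo_mem_nhds (by linarith) (by linarith)
  obtain ⟨r, hrpos, hr⟩ := Metric.eventually_nhds_iff_ball.mp hball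
  -- MVT-type bounds
  have key : ∀ a b : ℝ, 0 ≤ a → a ≤ b → b < r →
      d/2 * (b - a) ≤ f b - f a ∧ f b - f a ≤ 3*d/2 * (b - a) := by
    intro a b ha hab hbr
    rcases eq_or_lt_of_le hab with h | h
    · subst h; simp
    · obtain ⟨c, hc, hceq⟩ := exists_deriv_eq_slope f h
        (fun x _ => (hdiff x).continuousAt.continuousWithinAt)
        (fun x _ => (hdiff x).differentiableWithinAt)
      have hcin : deriv f c ∈ Set.Ioo (d/2) (3*d/2) := by
        apply hr
        rw [Metric.mem_ball, Real.dist_eq, sub_zero, abs_of_nonneg (le_trans ha hc.1.le)]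
        exact lt_trans hc.2 hbr
      have hba : (0:ℝ) < b - a := by linarith
      have hfe : f b - f a = deriv f c * (b - a) := by
        field_simp at hceq; linarith [hceq]
      constructor
      · rw [hfe]; exact mul_le_mul_of_nonneg_right hcin.1.le hba.le
      · rw [hfe]; exact mul_le_mul_of_nonneg_right hcin.2.le hba.le
  -- the eventual bound
  have hev : ∀ᶠ p in 𝓝[>] (0:ℝ),
      |ηp p / ηstar p - 1| ≤ 3*C * (q₁ p / p ^ (2 - 1/η)) := by
    filter_upwards [Ioo_mem_nhdsGT_of_mem (Set.left_mem_Ico.mpr hδ),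
      hηp0.eventually (gt_mem_nhds hrpos),
      hηs0.eventually (gt_mem_nhds hrpos)] with p hpδ hpr hsr
    have hp : (0:ℝ) < p := hpδ.1
    have hP : (0:ℝ) < p ^ (2 - 1/η) := Real.rpow_pos_of_pos hp _
    set P := p ^ (2 - 1/η) with hPdef
    obtain ⟨hηp1, hηp2⟩ := hηp p hpδ
    obtain ⟨hηs1, hηs2⟩ := hηs p hpδ
    -- q₁ p ≥ 0
    have hq0 : 0 ≤ q₁ p := by
      have := herr p hpδ 0 ⟨le_refl 0, zero_le_one⟩
      nlinarith [abs_nonneg (p ^ (-(1/η)) * Q p (p * 0) - f 0)]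
    -- |f (ηp p) - P| ≤ C * q₁ p
    have hfp : |f (ηp p) - P| ≤ C * q₁ p := by
      have h1 := herr p hpδ (ηp p) ⟨hηp1.le, hηp2⟩
      have h2 : p ^ (-(1/η)) * Q p (p * ηp p) = P := by
        rw [hQeq p hpδ, hPdef, ← Real.rpow_natCast p 2, ← Real.rpow_add hp]
        congr 1
        push_cast
        ring
      rw [h2] at h1
      rw [abs_sub_comm]
      exact h1
    have hfs : f (ηstar p) = P := hstar p hpδ
    -- |ηp - ηstar| ≤ 2*C*q₁/d
    have hdiff2 : |ηp p - ηstar p| ≤ 2*C*(q₁ p)/d := by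
      rcases le_total (ηstar p) (ηp p) with h | h
      · have := (key (ηstar p) (ηp p) hηs1.le h hpr).1
        rw [hfs] at this
        have habs : f (ηp p) - P ≤ C * q₁ p := (abs_le.mp hfp).2
        rw [abs_of_nonneg (by linarith), le_div_iff₀ hderivpos]
        nlinarith
      · have := (key (ηp p) (ηstar p) hηp1.le h hsr).1
        rw [hfs] at this
        have habs : -(C * q₁ p) ≤ f (ηp p) - P := (abs_le.mp hfp).1
        rw [abs_of_nonpos (by linarith), le_div_iff₀ hderivpos]
        nlinarith
    -- ηstar ≥ (2/(3d)) P
    have hslb : 2/(3*d) * P ≤ ηstar p := by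
      have := (key 0 (ηstar p) le_rfl hηs1.le hsr).2
      rw [h0, hfs, sub_zero, sub_zero] at this
      rw [div_mul_eq_mul_div, div_le_iff₀ (by linarith : (0:ℝ) < 3*d)]
      nlinarith
    -- combine
    have heq : ηp p / ηstar p - 1 = (ηp p - ηstar p) / ηstar p := by
      field_simp
    rw [heq, abs_div, abs_of_pos hηs1]
    have hb : |ηp p - ηstar p| / ηstar p ≤ (2*C*(q₁ p)/d) / (2/(3*d) * P) := by
      apply div_le_div₀ (by positivity) hdiff2 (by positivity) hslb
    calc |ηp p - ηstar p| / ηstar p ≤ (2*C*(q₁ p)/d) / (2/(3*d) * P) := hb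
      _ = 3*C * (q₁ p / P) := by
          field_simp
  -- conclude
  have hz : Tendsto (fun p => ηp p / ηstar p - 1) (𝓝[>] (0:ℝ)) (𝓝 0) := by
    apply squeeze_zero_norm' _ (by simpa using hq₁.const_mul (3*C))
    filter_upwards [hev] with p hp
    simpa [Real.norm_eq_abs] using hp
  have := hz.add_const 1
  simpa using this
end

section
/- Under the exact first-order condition Q(p, py) = p^{1/η}(c(1,y;θ₀) + R(p,y)) with sup_y |R(p,y)| ≤ q₁(p), and with the notation of Lemma 2, the difference of the adjustment factors satisfies the mean-value identity c_y(1, ξ_p; θ₀)(η*_p - η_p) = p^{2-1/η} - c(1, η_p; θ₀) for some ξ_p between η_p and η*_p, and hence |η_p/η*_p - 1| = O(q₁(p)/p^{2-1/η}) as p → 0. -/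
open Filter Topology Set Asymptotics

theorem mean_value_identity_and_rate (η : ℝ) (hη : η ∈ Set.Ioo ((1:ℝ)/2) 1)
    (f : ℝ → ℝ) (hmono : Monotone f) (h0 : f 0 = 0)
    (hdiff : ∀ y : ℝ, DifferentiableAt ℝ f y)
    (hderivcont : ContinuousAt (deriv f) 0) (hderivpos : 0 < deriv f 0)
    (Q : ℝ → ℝ → ℝ) (q₁ : ℝ → ℝ) (δ : ℝ) (hδ : 0 < δ)
    (hq₁nonneg : ∀ p : ℝ, 0 ≤ q₁ p)
    (ηp ηstar : ℝ → ℝ)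
    (hηp : ∀ p ∈ Set.Ioo (0:ℝ) δ, ηp p ∈ Set.Ioc (0:ℝ) 1)
    (hηs : ∀ p ∈ Set.Ioo (0:ℝ) δ, ηstar p ∈ Set.Ioc (0:ℝ) 1)
    (hQeq : ∀ p ∈ Set.Ioo (0:ℝ) δ, Q p (p * ηp p) = p ^ 2)
    (hR : ∀ p ∈ Set.Ioo (0:ℝ) δ, ∀ y ∈ Set.Icc (0:ℝ) 1,
      |Q p (p * y) - p ^ (1/η) * f y| ≤ p ^ (1/η) * q₁ p)
    (hstar : ∀ p ∈ Set.Ioo (0:ℝ) δ, f (ηstar p) = p ^ (2 - 1/η))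
    (hηp0 : Tendsto ηp (𝓝[>] 0) (𝓝 0))
    (hηs0 : Tendsto ηstar (𝓝[>] 0) (𝓝 0))
    (hlim : Tendsto (fun p : ℝ => p ^ (2 - 1/η) / ηstar p) (𝓝[>] 0) (𝓝 (deriv f 0))) :
    (∀ p ∈ Set.Ioo (0:ℝ) δ, ∃ ξ ∈ Set.uIcc (ηp p) (ηstar p),
        deriv f ξ * (ηstar p - ηp p) = p ^ (2 - 1/η) - f (ηp p)) ∧
      (fun p : ℝ => ηp p / ηstar p - 1)
        =O[𝓝[>] (0:ℝ)] fun p : ℝ => q₁ p / p ^ (2 - 1/η) := by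
  set d := deriv f 0 with hd
  -- Part 1: mean value identity
  have part1 : ∀ p ∈ Set.Ioo (0:ℝ) δ, ∃ ξ ∈ Set.uIcc (ηp p) (ηstar p),
      deriv f ξ * (ηstar p - ηp p) = p ^ (2 - 1/η) - f (ηp p) := by
    intro p hp
    rw [← hstar p hp]
    rcases lt_trichotomy (ηp p) (ηstar p) with h | h | h
    · obtain ⟨c, hc, hc'⟩ := exists_deriv_eq_slope f h
        (fun y _ => (hdiff y).continuousAt.continuousWithinAt)
        (fun y _ => (hdiff y).differentiableWithinAt)
      refine ⟨c, Set.mem_uIcc.2 (Or.inl ⟨hc.1.le, hc.2.le⟩), ?_⟩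
      have hne : ηstar p - ηp p ≠ 0 := sub_ne_zero.2 h.ne'
      rw [hc']; field_simp
    · exact ⟨ηp p, Set.left_mem_uIcc, by rw [h]; ring⟩
    · obtain ⟨c, hc, hc'⟩ := exists_deriv_eq_slope f h
        (fun y _ => (hdiff y).continuousAt.continuousWithinAt)
        (fun y _ => (hdiff y).differentiableWithinAt)
      refine ⟨c, Set.mem_uIcc.2 (Or.inr ⟨hc.1.le, hc.2.le⟩), ?_⟩
      have hne : ηp p - ηstar p ≠ 0 := sub_ne_zero.2 h.ne'
      rw [hc']
      field_simp
      ring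
  refine ⟨part1, ?_⟩
  -- Part 2
  rw [isBigO_iff]
  refine ⟨4, ?_⟩
  -- neighborhood where deriv f > d/2
  have hhalf : (0:ℝ) < d / 2 := by positivity
  have hev : ∀ᶠ y in 𝓝 (0:ℝ), d / 2 < deriv f y :=
    hderivcont.eventually (eventually_gt_nhds (by linarith))
  obtain ⟨r, hrpos, hr⟩ := Metric.eventually_nhds_iff.1 hev
  have hmem : ∀ᶠ p in 𝓝[>] (0:ℝ), p ∈ Set.Ioo (0:ℝ) δ :=
    Ioo_mem_nhdsGT_of_mem ⟨le_refl 0, hδ⟩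
  have hsmall1 : ∀ᶠ p in 𝓝[>] (0:ℝ), ηp p < r :=
    hηp0.eventually (eventually_lt_nhds hrpos)
  have hsmall2 : ∀ᶠ p in 𝓝[>] (0:ℝ), ηstar p < r :=
    hηs0.eventually (eventually_lt_nhds hrpos)
  have hratio : ∀ᶠ p in 𝓝[>] (0:ℝ), p ^ (2 - 1/η) / ηstar p < 2 * d :=
    hlim.eventually (eventually_lt_nhds (by linarith))
  filter_upwards [hmem, hsmall1, hsmall2, hratio] with p hp hs1 hs2 hrt
  have hp0 : (0:ℝ) < p := hp.1
  obtain ⟨hap, ha1⟩ := hηp p hp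
  obtain ⟨hbp, hb1⟩ := hηs p hp
  -- key bound |p^(2-1/η) - f (ηp p)| ≤ q₁ p
  have hpow : p ^ (1/η) * p ^ (2 - 1/η) = p ^ 2 := by
    rw [← Real.rpow_add hp0]
    norm_num
  have hRp := hR p hp (ηp p) ⟨hap.le, ha1⟩
  rw [hQeq p hp] at hRp
  have hp1 : (0:ℝ) < p ^ (1/η) := Real.rpow_pos_of_pos hp0 _
  have hkey : |p ^ (2 - 1/η) - f (ηp p)| ≤ q₁ p := by
    have : p ^ 2 - p ^ (1/η) * f (ηp p) = p ^ (1/η) * (p ^ (2 - 1/η) - f (ηp p)) := by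
      rw [mul_sub, hpow]
    rw [this, abs_mul, abs_of_pos hp1] at hRp
    exact le_of_mul_le_mul_left hRp hp1
  -- mean value point
  obtain ⟨ξ, hξ, hξeq⟩ := part1 p hp
  have hξmem := Set.mem_uIcc.1 hξ
  have hξr : |ξ| < r := by
    rcases hξmem with ⟨h1, h2⟩ | ⟨h1, h2⟩ <;>
      rw [abs_of_pos (by linarith)] <;> linarith
  have hDξ : d / 2 < deriv f ξ := hr (by simpa [Real.dist_eq] using hξr)
  have hDξ0 : (0:ℝ) < deriv f ξ := by linarith
  -- |ηstar - ηp| ≤ 2 q₁ / d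
  have hdiffb : |ηstar p - ηp p| ≤ 2 * q₁ p / d := by
    have h1 : deriv f ξ * |ηstar p - ηp p| ≤ q₁ p := by
      calc deriv f ξ * |ηstar p - ηp p| = |deriv f ξ * (ηstar p - ηp p)| := by
            rw [abs_mul, abs_of_pos hDξ0]
        _ = |p ^ (2 - 1/η) - f (ηp p)| := by rw [hξeq]
        _ ≤ q₁ p := hkey
    have h2 : d / 2 * |ηstar p - ηp p| ≤ q₁ p :=
      le_trans (mul_le_mul_of_nonneg_right hDξ.le (abs_nonneg _)) h1
    rw [le_div_iff₀ hderivpos]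
    linarith
  have hA : (0:ℝ) < p ^ (2 - 1/η) := Real.rpow_pos_of_pos hp0 _
  have hsb : 1 / ηstar p ≤ 2 * d / p ^ (2 - 1/η) := by
    rw [div_le_div_iff₀ hbp hA]
    have := hrt
    rw [div_lt_iff₀ hbp] at this
    linarith
  have habs : |ηp p / ηstar p - 1| ≤ 4 * (q₁ p / p ^ (2 - 1/η)) := by
    have heq : ηp p / ηstar p - 1 = (ηp p - ηstar p) / ηstar p := by
      field_simp
    rw [heq, abs_div, abs_of_pos hbp]
    have h1 : |ηp p - ηstar p| = |ηstar p - ηp p| := abs_sub_comm _ _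
    have hq0 : 0 ≤ q₁ p := hq₁nonneg p
    have hd0 : d ≠ 0 := hderivpos.ne'
    calc |ηp p - ηstar p| / ηstar p ≤ (2 * q₁ p / d) / ηstar p := by
          gcongr
          rw [h1]; exact hdiffb
      _ = (2 * q₁ p / d) * (1 / ηstar p) := by ring
      _ ≤ (2 * q₁ p / d) * (2 * d / p ^ (2 - 1/η)) := by
          apply mul_le_mul_of_nonneg_left hsb
          exact div_nonneg (by linarith) hderivpos.le
      _ = 4 * (q₁ p / p ^ (2 - 1/η)) := by
          field_simp
          ring
    done
  calc |ηp p / ηstar p - 1| ≤ 4 * (q₁ p / p ^ (2 - 1/η)) := habs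
    _ = 4 * |q₁ p / p ^ (2 - 1/η)| := by
        rw [abs_of_nonneg (div_nonneg (hq₁nonneg p) hA.le)]
end
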